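/- arXiv:1807.06686 — 11 statements merged into one kernel-verified Lean document; each statement's English description precedes it below -/
import Mathlib

section
/- For every γ ≥ 1, the Sørensen_γ similarity S(X,Y) = |X ∩ Y| / (|X ∩ Y| + γ|X △ Y|) (with S(X,X) = 1) is supermodular with respect to the symmetric difference: for every fixed X ⊆ V, the set function f_X : A ↦ S(X, X △ A) is supermodular. -/
/-!
For `x = |X| > 0` we have `S(X, X ∆ C) = φ(|X ∩ C|, |C \ X|)` with
`φ(p, q) = (x - p) / (x + (γ - 1) p + γ q)`, and both coordinates are monotone modular functions
of `C`. Composing such a map with a function whose increments along either coordinate are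
monotone in both coordinates (a discrete directional convexity) gives a supermodular function.
For `φ` the increments have the closed forms `-s γ (x + q) / (D(p, q) D(p + s, q))` and
`-t γ (x - p) / (D(p, q) D(p, q + t))`, with `D` the denominator of `φ`, and `γ ≥ 1` makes
`D` grow with `p`, which yields the monotonicity. For `X = ∅`, `S(X, X ∆ C)` is the indicator
of `C = ∅`, which is supermodular directly.
-/

open Finset

section MonotoneIncrements

variable {α β M : Type*} [AddCommGroup α] [PartialOrder α] [IsOrderedAddMonoid α]
  [AddCommGroup β] [PartialOrder β] [IsOrderedAddMonoid β]
  [AddCommGroup M] [PartialOrder M] [IsOrderedAddMonoid M]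

structure HasMonotoneIncrementsOn (φ : α × β → M) (I : Set α) (J : Set β) : Prop where
  fst : ∀ ⦃p p' s : α⦄ ⦃q q' : β⦄, p ∈ I → p' + s ∈ I → q ∈ J → q' ∈ J →
    p ≤ p' → q ≤ q' → 0 ≤ s → φ (p + s, q) - φ (p, q) ≤ φ (p' + s, q') - φ (p', q')
  snd : ∀ ⦃p p' : α⦄ ⦃q q' t : β⦄, p ∈ I → p' ∈ I → q ∈ J → q' + t ∈ J →
    p ≤ p' → q ≤ q' → 0 ≤ t → φ (p, q + t) - φ (p, q) ≤ φ (p', q' + t) - φ (p', q')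

variable {φ : α × β → M} {I : Set α} {J : Set β} [I.OrdConnected] [J.OrdConnected]

theorem HasMonotoneIncrementsOn.sub_le_sub (hφ : HasMonotoneIncrementsOn φ I J)
    {z z' v : α × β} (hz : z ∈ I ×ˢ J) (hz' : z' + v ∈ I ×ˢ J) (hzz' : z ≤ z') (hv : 0 ≤ v) :
    φ (z + v) - φ z ≤ φ (z' + v) - φ z' := by
  obtain ⟨p, q⟩ := z
  obtain ⟨p', q'⟩ := z'
  obtain ⟨s, t⟩ := v
  obtain ⟨⟨hp : p ∈ I, hq : q ∈ J⟩, ⟨hps' : p' + s ∈ I, hqt' : q' + t ∈ J⟩⟩ := And.intro hz hz'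
  obtain ⟨hpp' : p ≤ p', hqq' : q ≤ q'⟩ := hzz'
  obtain ⟨hs : 0 ≤ s, ht : 0 ≤ t⟩ := hv
  have hq' : q' ∈ J := Set.OrdConnected.out ‹_› hq hqt' ⟨hqq', le_add_of_nonneg_right ht⟩
  have hps : p + s ∈ I :=
    Set.OrdConnected.out ‹_› hp hps' ⟨le_add_of_nonneg_right hs, add_le_add_left hpp' s⟩
  have := add_le_add (hφ.snd hps hps' hq hqt' (add_le_add_left hpp' s) hqq' ht)
    (hφ.fst hp hps' hq hq' hpp' hqq' hs)
  rwa [sub_add_sub_cancel, sub_add_sub_cancel] at this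

theorem HasMonotoneIncrementsOn.add_le_add_sup_inf (hφ : HasMonotoneIncrementsOn φ I J)
    {L : Type*} [Lattice L] {m : L → α × β} (hm : Monotone m)
    (hmod : ∀ A B, m (A ⊔ B) + m (A ⊓ B) = m A + m B) (hmem : ∀ A, m A ∈ I ×ˢ J) (A B : L) :
    φ (m A) + φ (m B) ≤ φ (m (A ⊔ B)) + φ (m (A ⊓ B)) := by
  have hA : m (A ⊓ B) + (m A - m (A ⊓ B)) = m A := add_sub_cancel _ _
  have hAB : m B + (m A - m (A ⊓ B)) = m (A ⊔ B) := by
    rw [← add_sub_assoc, add_comm, ← hmod, add_sub_cancel_right]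
  have := hφ.sub_le_sub (hmem (A ⊓ B)) (hAB ▸ hmem (A ⊔ B)) (hm inf_le_right)
    (sub_nonneg.2 (hm inf_le_left))
  rwa [hA, hAB, sub_le_sub_iff] at this

end MonotoneIncrements

noncomputable def sorensenProfile (γ x : ℝ) (z : ℝ × ℝ) : ℝ :=
  (x - z.1) / (x + (γ - 1) * z.1 + γ * z.2)

section SorensenProfile

variable {γ x : ℝ}

theorem sorensenProfile_denom_pos (hγ : 1 ≤ γ) (hx : 0 < x) {p q : ℝ} (hp : 0 ≤ p)
    (hq : 0 ≤ q) : 0 < x + (γ - 1) * p + γ * q := by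
  have : 0 ≤ γ - 1 := sub_nonneg.2 hγ
  positivity

theorem sorensenProfile_fst_increment_mono (hγ : 1 ≤ γ) (hx : 0 < x) {p p' s q q' : ℝ}
    (hp : 0 ≤ p) (hps' : p' + s ≤ x) (hq : 0 ≤ q) (hpp' : p ≤ p') (hqq' : q ≤ q') (hs : 0 ≤ s) :
    sorensenProfile γ x (p + s, q) - sorensenProfile γ x (p, q) ≤
      sorensenProfile γ x (p' + s, q') - sorensenProfile γ x (p', q') := by
  have hγ' : 0 ≤ γ - 1 := sub_nonneg.2 hγ
  have increment : ∀ p q, 0 ≤ p → 0 ≤ q →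
      sorensenProfile γ x (p + s, q) - sorensenProfile γ x (p, q) =
        -(s * γ * (1 / (x + (γ - 1) * p + γ * q) *
          ((x + q) / (x + (γ - 1) * (p + s) + γ * q)))) := by
    intro p q hp hq
    have := sorensenProfile_denom_pos hγ hx hp hq
    have := sorensenProfile_denom_pos hγ hx (add_nonneg hp hs) hq
    unfold sorensenProfile
    field_simp
    ring
  rw [increment p q hp hq, increment p' q' (hp.trans hpp') (hq.trans hqq')]
  have hD := sorensenProfile_denom_pos hγ hx hp hq
  have hDs := sorensenProfile_denom_pos hγ hx (add_nonneg hp hs) hq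
  have hDs' := sorensenProfile_denom_pos hγ hx (add_nonneg (hp.trans hpp') hs) (hq.trans hqq')
  have first : 1 / (x + (γ - 1) * p' + γ * q') ≤ 1 / (x + (γ - 1) * p + γ * q) := by
    gcongr
  -- `(x + q) / (x + (γ - 1) * r + γ * q) = 1 / (1 + (γ - 1) * (r + q) / (x + q))`,
  -- and `(r + q) / (x + q)` grows with `q` because `r ≤ x`.
  have second : (x + q') / (x + (γ - 1) * (p' + s) + γ * q') ≤
      (x + q) / (x + (γ - 1) * (p + s) + γ * q) := by
    rw [div_le_div_iff₀ hDs' hDs]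
    nlinarith [mul_nonneg hγ' (mul_nonneg (add_nonneg hx.le hq) (sub_nonneg.2 hpp')),
      mul_nonneg hγ' (mul_nonneg (by linarith : 0 ≤ x - (p + s)) (sub_nonneg.2 hqq'))]
  exact neg_le_neg (mul_le_mul_of_nonneg_left
    (mul_le_mul first second (div_nonneg (by linarith) hDs'.le) (by positivity))
    (mul_nonneg hs (by linarith)))

theorem sorensenProfile_snd_increment_mono (hγ : 1 ≤ γ) (hx : 0 < x) {p p' q q' t : ℝ}
    (hp : 0 ≤ p) (hp' : p' ≤ x) (hq : 0 ≤ q) (hpp' : p ≤ p') (hqq' : q ≤ q') (ht : 0 ≤ t) :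
    sorensenProfile γ x (p, q + t) - sorensenProfile γ x (p, q) ≤
      sorensenProfile γ x (p', q' + t) - sorensenProfile γ x (p', q') := by
  have hγ' : 0 ≤ γ - 1 := sub_nonneg.2 hγ
  have increment : ∀ p q, 0 ≤ p → 0 ≤ q →
      sorensenProfile γ x (p, q + t) - sorensenProfile γ x (p, q) =
        -(t * γ * ((x - p) /
          ((x + (γ - 1) * p + γ * q) * (x + (γ - 1) * p + γ * (q + t))))) := by
    intro p q hp hq
    have := sorensenProfile_denom_pos hγ hx hp hq
    have := sorensenProfile_denom_pos hγ hx hp (add_nonneg hq ht)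
    unfold sorensenProfile
    field_simp
    ring
  rw [increment p q hp hq, increment p' q' (hp.trans hpp') (hq.trans hqq')]
  have := sorensenProfile_denom_pos hγ hx (hp.trans hpp') (hq.trans hqq')
  have := sorensenProfile_denom_pos hγ hx (hp.trans hpp') (add_nonneg (hq.trans hqq') ht)
  have : 0 ≤ x - p' := sub_nonneg.2 hp'
  have : 0 ≤ x - p := by linarith
  gcongr

theorem sorensenProfile_hasMonotoneIncrementsOn (hγ : 1 ≤ γ) (hx : 0 < x) :
    HasMonotoneIncrementsOn (sorensenProfile γ x) (Set.Icc 0 x) (Set.Ici 0) where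
  fst _ _ _ _ _ hp hps' hq _ hpp' hqq' hs :=
    sorensenProfile_fst_increment_mono hγ hx hp.1 hps'.2 hq hpp' hqq' hs
  snd _ _ _ _ _ hp hp' hq _ hpp' hqq' ht :=
    sorensenProfile_snd_increment_mono hγ hx hp.1 hp'.2 hq hpp' hqq' ht

end SorensenProfile

section CardInterSdiff

variable {V : Type*} [DecidableEq V]

def cardInterSdiff (X C : Finset V) : ℝ × ℝ := (#(X ∩ C), #(C \ X))

theorem cardInterSdiff_mono (X : Finset V) : Monotone (cardInterSdiff X) := by
  intro C D h
  simp only [cardInterSdiff, Prod.mk_le_mk]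
  constructor <;> gcongr

theorem cardInterSdiff_union_add_inter (X C D : Finset V) :
    cardInterSdiff X (C ∪ D) + cardInterSdiff X (C ∩ D) =
      cardInterSdiff X C + cardInterSdiff X D := by
  simp only [cardInterSdiff, Prod.mk_add_mk, Prod.mk.injEq]
  norm_cast
  rw [inter_union_distrib_left, inter_inter_distrib_left, union_sdiff_distrib,
    show (C ∩ D) \ X = C \ X ∩ (D \ X) from inf_sdiff]
  exact ⟨card_union_add_card_inter _ _, card_union_add_card_inter _ _⟩

theorem cardInterSdiff_mem (X C : Finset V) :
    cardInterSdiff X C ∈ Set.Icc 0 (#X : ℝ) ×ˢ Set.Ici 0 := by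
  simp only [cardInterSdiff, Set.mem_prod, Set.mem_Icc, Set.mem_Ici]
  exact ⟨⟨by positivity, by exact_mod_cast card_le_card inter_subset_left⟩, by positivity⟩

end CardInterSdiff

section SorensenSimilarity

variable {V : Type*} [DecidableEq V] {γ : ℝ} {S : Finset V → Finset V → ℝ}

theorem sorensen_symmDiff_eq
    (hS : ∀ X Y : Finset V, X ≠ Y →
      S X Y = (#(X ∩ Y) : ℝ) / (#(X ∩ Y) + γ * #(symmDiff X Y)))
    (hS' : ∀ X, S X X = 1) {X : Finset V} (hX : X.Nonempty) (C : Finset V) :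
    S X (symmDiff X C) = sorensenProfile γ #X (cardInterSdiff X C) := by
  rcases eq_or_ne C ∅ with rfl | hC
  · rw [← bot_eq_empty, symmDiff_bot, hS']
    simp [sorensenProfile, cardInterSdiff, hX.card_pos.ne']
  have hne : X ≠ symmDiff X C := fun h => hC (symmDiff_eq_left.1 h.symm)
  have hinter : X ∩ symmDiff X C = X \ C := by ext; simp [mem_symmDiff]; tauto
  have hsdiff : (#(X \ C) : ℝ) = #X - #(X ∩ C) := by
    rw [eq_sub_iff_add_eq]; exact_mod_cast card_sdiff_add_card_inter X C
  have hcard : (#C : ℝ) = #(X ∩ C) + #(C \ X) := by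
    rw [inter_comm, add_comm]; exact_mod_cast (card_sdiff_add_card_inter C X).symm
  rw [hS X _ hne, symmDiff_symmDiff_cancel_left, hinter, hsdiff, hcard, sorensenProfile,
    cardInterSdiff]
  congr 1
  ring

theorem sorensen_empty_symmDiff_eq
    (hS : ∀ X Y : Finset V, X ≠ Y →
      S X Y = (#(X ∩ Y) : ℝ) / (#(X ∩ Y) + γ * #(symmDiff X Y)))
    (hS' : ∀ X, S X X = 1) (C : Finset V) :
    S ∅ (symmDiff ∅ C) = if C = ∅ then 1 else 0 := by
  rw [← bot_eq_empty, bot_symmDiff, bot_eq_empty]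
  split_ifs with hC
  · rw [hC, hS']
  · simp [hS ∅ C (Ne.symm hC)]

end SorensenSimilarity

theorem sorensen_gamma_supermodular_general {V : Type*} [DecidableEq V]
    (γ : ℝ) (hγ : 1 ≤ γ)
    (S : Finset V → Finset V → ℝ)
    (hS : ∀ X Y : Finset V, X ≠ Y →
      S X Y = (X ∩ Y).card / ((X ∩ Y).card + γ * (symmDiff X Y).card))
    (hS' : ∀ X : Finset V, S X X = 1)
    (X : Finset V) :
    ∀ A B : Finset V,
      S X (symmDiff X (A ∪ B)) + S X (symmDiff X (A ∩ B)) ≥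
        S X (symmDiff X A) + S X (symmDiff X B) := by
  intro A B
  rcases X.eq_empty_or_nonempty with rfl | hX
  · simp only [sorensen_empty_symmDiff_eq hS hS']
    split_ifs <;> simp_all
  have hx : (0 : ℝ) < #X := by exact_mod_cast hX.card_pos
  simp only [sorensen_symmDiff_eq hS hS' hX]
  exact (sorensenProfile_hasMonotoneIncrementsOn hγ hx).add_le_add_sup_inf
    (cardInterSdiff_mono X) (cardInterSdiff_union_add_inter X) (cardInterSdiff_mem X) A B

/-- The Sørensen_γ similarity is supermodular w.r.t. the symmetric difference for γ ≥ 1. -/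
theorem sorensen_gamma_supermodular {V : Type*} [Fintype V] [DecidableEq V]
    (γ : ℝ) (hγ : 1 ≤ γ)
    (S : Finset V → Finset V → ℝ)
    (hS : ∀ X Y : Finset V, X ≠ Y →
      S X Y = (X ∩ Y).card / ((X ∩ Y).card + γ * (symmDiff X Y).card))
    (hS' : ∀ X : Finset V, S X X = 1)
    (X : Finset V) :
    ∀ A B : Finset V,
      S X (symmDiff X (A ∪ B)) + S X (symmDiff X (A ∩ B)) ≥
        S X (symmDiff X A) + S X (symmDiff X B) :=
  sorensen_gamma_supermodular_general γ hγ S hS hS' X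
end

section
/- For every fixed X ⊆ V and γ ≥ 1, the set function A ↦ S(X, X △ A) induced by the Sørensen_γ similarity is monotonically decreasing: A ⊆ B implies S(X, X △ A) ≥ S(X, X △ B). -/
/-! Since `X ∩ (X ∆ C) = X \ C` and `X ∆ (X ∆ C) = C`, for nonempty `C` the similarity
`S(X, X ∆ C)` is `|X \ C| / (|X \ C| + γ|C|)`: enlarging `C` shrinks the numerator and grows
the penalty `γ|C|`, so the value decreases. At `C = ∅` the value is `1`, which bounds the
closed form from above. -/

open Finset

theorem inf_symmDiff_self_left {α : Type*} [GeneralizedBooleanAlgebra α] (a b : α) :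
    a ⊓ symmDiff a b = a \ b := by
  rw [inf_symmDiff_distrib_left, inf_idem, symmDiff_of_ge inf_le_left, sdiff_inf_self_left]

noncomputable def sorensenPerturbation (γ : ℝ) {V : Type*} [DecidableEq V] (X C : Finset V) : ℝ :=
  (X \ C).card / ((X \ C).card + γ * C.card)

theorem div_add_mul_le_div_add_mul {a b s t γ : ℝ} (hb : 0 ≤ b) (hba : b ≤ a) (hs : 0 ≤ s)
    (hst : s ≤ t) (hγ : 0 ≤ γ) : b / (b + γ * t) ≤ a / (a + γ * s) := by
  rcases hb.eq_or_lt with rfl | hb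
  · simp only [zero_div, zero_add]
    exact div_nonneg (hb.trans hba) (by positivity)
  · rw [div_le_div_iff₀ (add_pos_of_pos_of_nonneg hb (mul_nonneg hγ (hs.trans hst)))
      (add_pos_of_pos_of_nonneg (hb.trans_le hba) (mul_nonneg hγ hs))]
    nlinarith [mul_le_mul hba hst hs (hb.le.trans hba), mul_nonneg hγ hs]

theorem sorensenPerturbation_antitone {γ : ℝ} (hγ : 0 ≤ γ) {V : Type*} [DecidableEq V]
    (X : Finset V) : Antitone (sorensenPerturbation γ X) := fun _ _ hAB =>
  div_add_mul_le_div_add_mul (Nat.cast_nonneg _)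
    (Nat.cast_le.mpr (card_le_card (sdiff_subset_sdiff le_rfl hAB))) (Nat.cast_nonneg _)
    (Nat.cast_le.mpr (card_le_card hAB)) hγ

theorem sorensenPerturbation_le_one {γ : ℝ} (hγ : 0 ≤ γ) {V : Type*} [DecidableEq V]
    (X C : Finset V) : sorensenPerturbation γ X C ≤ 1 :=
  div_le_one_of_le₀ (le_add_of_nonneg_right (by positivity)) (by positivity)

theorem sorensen_symmDiff_eq_sorensenPerturbation {V : Type*} [DecidableEq V] {γ : ℝ}
    {S : Finset V → Finset V → ℝ}
    (hS : ∀ X Y : Finset V, X ≠ Y →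
      S X Y = (X ∩ Y).card / ((X ∩ Y).card + γ * (symmDiff X Y).card))
    (X : Finset V) {C : Finset V} (hC : C.Nonempty) :
    S X (symmDiff X C) = sorensenPerturbation γ X C := by
  have hne : X ≠ symmDiff X C := fun h => hC.ne_empty (symmDiff_eq_left.mp h.symm)
  rw [hS X _ hne, ← inf_eq_inter, inf_symmDiff_self_left, symmDiff_symmDiff_cancel_left]
  rfl

theorem sorensen_gamma_monotone_decreasing_general {V : Type*} [DecidableEq V]
    (γ : ℝ) (hγ : 1 ≤ γ)
    (S : Finset V → Finset V → ℝ)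
    (hS : ∀ X Y : Finset V, X ≠ Y →
      S X Y = (X ∩ Y).card / ((X ∩ Y).card + γ * (symmDiff X Y).card))
    (hS' : ∀ X : Finset V, S X X = 1)
    (X : Finset V) :
    ∀ A B : Finset V, A ⊆ B → S X (symmDiff X A) ≥ S X (symmDiff X B) := by
  intro A B hAB
  have hγ₀ : 0 ≤ γ := zero_le_one.trans hγ
  rcases B.eq_empty_or_nonempty with rfl | hB
  · rw [subset_empty.mp hAB]
  rw [sorensen_symmDiff_eq_sorensenPerturbation hS X hB]
  rcases A.eq_empty_or_nonempty with rfl | hA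
  · rw [← bot_eq_empty, symmDiff_bot, hS']
    exact sorensenPerturbation_le_one hγ₀ X B
  · rw [sorensen_symmDiff_eq_sorensenPerturbation hS X hA]
    exact sorensenPerturbation_antitone hγ₀ X hAB

/-- The set function induced by the Sørensen_γ similarity (γ ≥ 1) is monotonically decreasing. -/
theorem sorensen_gamma_monotone_decreasing {V : Type*} [Fintype V] [DecidableEq V]
    (γ : ℝ) (hγ : 1 ≤ γ)
    (S : Finset V → Finset V → ℝ)
    (hS : ∀ X Y : Finset V, X ≠ Y →
      S X Y = (X ∩ Y).card / ((X ∩ Y).card + γ * (symmDiff X Y).card))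
    (hS' : ∀ X : Finset V, S X X = 1)
    (X : Finset V) :
    ∀ A B : Finset V, A ⊆ B → S X (symmDiff X A) ≥ S X (symmDiff X B) :=
  sorensen_gamma_monotone_decreasing_general γ hγ S hS hS' X
end

section
/- For every 0 < γ < 1, the Sørensen_γ similarity S(X,Y) = |X ∩ Y| / (|X ∩ Y| + γ|X △ Y|) is neither submodular nor supermodular with respect to the symmetric difference: there exist a finite base set V, X ⊆ V, and sets witnessing violation of each of the two inequalities for f_X : A ↦ S(X, X △ A). -/
/-!
Write `f_X(A) = S(X, X ∆ A)`; then `f_X(∅) = 1` and `f_X(A) = |X \ A| / (|X \ A| + γ |A|)`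
for `A ≠ ∅`.

If `A`, `B` are nonempty, disjoint from each other and from `X`, then `f_X` depends only on
`t = |A|` through `t ↦ |X| / (|X| + γ t)`, which is strictly convex; this gives
`f_X(A) + f_X(B) < f_X(A ∪ B) + f_X(∅)`, so `f_X` is not submodular.

If instead `X = A ⊔ B` with `A`, `B` nonempty, then `f_X(A ∪ B) + f_X(∅) = 0 + 1`, while
`f_X(A) + f_X(B) = |B| / (|B| + γ|A|) + |A| / (|A| + γ|B|)` exceeds
`|B| / (|A| + |B|) + |A| / (|A| + |B|) = 1` because `γ < 1`; so `f_X` is not supermodular.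
-/

open Finset

/-- The Sørensen_γ similarity, with 0/0 interpreted as 0 (Lean's division convention). -/
noncomputable def sorensenSim (n : ℕ) (γ : ℝ) (X Y : Finset (Fin n)) : ℝ :=
  if X = Y then 1 else (X ∩ Y).card / ((X ∩ Y).card + γ * (symmDiff X Y).card)

theorem div_add_div_lt_div_add_one {x a b γ : ℝ} (hx : 0 < x) (ha : 0 < a) (hb : 0 < b)
    (hγ : 0 < γ) : x / (x + γ * a) + x / (x + γ * b) < x / (x + γ * (a + b)) + 1 := by
  have hxa : 0 < x + γ * a := by positivity
  have hxb : 0 < x + γ * b := by positivity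
  have hxab : 0 < x + γ * (a + b) := by positivity
  rw [div_add_div _ _ hxa.ne' hxb.ne', div_add_one hxab.ne',
    div_lt_div_iff₀ (by positivity) hxab]
  -- the two sides differ by `(2x + γa + γb) · γa · γb`
  nlinarith [mul_pos (by positivity : 0 < 2 * x + γ * a + γ * b)
    (mul_pos (mul_pos hγ ha) (mul_pos hγ hb))]

theorem one_lt_div_add_div {a b γ : ℝ} (ha : 0 < a) (hb : 0 < b) (hγ₀ : 0 ≤ γ)
    (hγ₁ : γ < 1) :
    1 < b / (b + γ * a) + a / (a + γ * b) := calc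
  1 = b / (b + a) + a / (a + b) := by field_simp; ring
  _ < b / (b + γ * a) + a / (a + γ * b) := by gcongr <;> nlinarith

section

variable {n : ℕ} (γ : ℝ)

theorem sorensenSim_symmDiff_right (X A : Finset (Fin n)) :
    sorensenSim n γ X (symmDiff X A) =
      if A = ∅ then 1 else #(X \ A) / (#(X \ A) + γ * #A) := by
  have hinter : X ∩ symmDiff X A = X \ A := by
    rw [← inf_eq_inter, inf_symmDiff_distrib_left, inf_idem, symmDiff_of_ge inf_le_left,
      sdiff_inf_self_left]
  simp only [sorensenSim, symmDiff_symmDiff_cancel_left, hinter, eq_comm (a := X),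
    symmDiff_eq_left, bot_eq_empty]

theorem sorensenSim_symmDiff_empty (X : Finset (Fin n)) :
    sorensenSim n γ X (symmDiff X ∅) = 1 := by
  simp [sorensenSim_symmDiff_right]

variable {γ} {X A B : Finset (Fin n)}

theorem sorensenSim_symmDiff_of_disjoint (hA : A.Nonempty) (h : Disjoint X A) :
    sorensenSim n γ X (symmDiff X A) = #X / (#X + γ * #A) := by
  rw [sorensenSim_symmDiff_right, if_neg hA.ne_empty, h.sdiff_eq_left]

theorem sorensenSim_symmDiff_of_subset (hA : A.Nonempty) (h : X ⊆ A) :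
    sorensenSim n γ X (symmDiff X A) = 0 := by
  rw [sorensenSim_symmDiff_right, if_neg hA.ne_empty, sdiff_eq_empty_iff_subset.mpr h]
  simp

theorem sorensenSim_symmDiff_add_lt_of_disjoint (hγ : 0 < γ) (hX : X.Nonempty)
    (hA : A.Nonempty) (hB : B.Nonempty) (hXA : Disjoint X A) (hXB : Disjoint X B)
    (hAB : Disjoint A B) :
    sorensenSim n γ X (symmDiff X A) + sorensenSim n γ X (symmDiff X B) <
      sorensenSim n γ X (symmDiff X (A ∪ B)) + sorensenSim n γ X (symmDiff X (A ∩ B)) := by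
  rw [sorensenSim_symmDiff_of_disjoint hA hXA, sorensenSim_symmDiff_of_disjoint hB hXB,
    sorensenSim_symmDiff_of_disjoint (hA.mono subset_union_left)
      (disjoint_union_right.mpr ⟨hXA, hXB⟩),
    disjoint_iff_inter_eq_empty.mp hAB, sorensenSim_symmDiff_empty, card_union_of_disjoint hAB,
    Nat.cast_add]
  exact div_add_div_lt_div_add_one (by simpa) (by simpa) (by simpa) hγ

theorem sorensenSim_symmDiff_add_lt_of_partition (hγ₀ : 0 ≤ γ) (hγ₁ : γ < 1)
    (hA : A.Nonempty) (hB : B.Nonempty) (hAB : Disjoint A B) :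
    sorensenSim n γ (A ∪ B) (symmDiff (A ∪ B) (A ∪ B)) +
        sorensenSim n γ (A ∪ B) (symmDiff (A ∪ B) (A ∩ B)) <
      sorensenSim n γ (A ∪ B) (symmDiff (A ∪ B) A) +
        sorensenSim n γ (A ∪ B) (symmDiff (A ∪ B) B) := by
  rw [sorensenSim_symmDiff_of_subset (hA.mono subset_union_left) subset_rfl,
    disjoint_iff_inter_eq_empty.mp hAB, sorensenSim_symmDiff_empty,
    sorensenSim_symmDiff_right, if_neg hA.ne_empty, union_sdiff_cancel_left hAB,
    sorensenSim_symmDiff_right, if_neg hB.ne_empty, union_sdiff_cancel_right hAB, zero_add]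
  exact one_lt_div_add_div (by simpa) (by simpa) hγ₀ hγ₁

end

/-- For 0 < γ < 1, the Sørensen_γ similarity is neither submodular nor supermodular
w.r.t. the symmetric difference. -/
theorem sorensen_gamma_neither_sub_nor_supermodular (γ : ℝ) (h0 : 0 < γ) (h1 : γ < 1) :
    (∃ (n : ℕ) (X A B : Finset (Fin n)),
      sorensenSim n γ X (symmDiff X (A ∪ B)) + sorensenSim n γ X (symmDiff X (A ∩ B)) >
        sorensenSim n γ X (symmDiff X A) + sorensenSim n γ X (symmDiff X B)) ∧
    (∃ (n : ℕ) (X A B : Finset (Fin n)),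
      sorensenSim n γ X (symmDiff X (A ∪ B)) + sorensenSim n γ X (symmDiff X (A ∩ B)) <
        sorensenSim n γ X (symmDiff X A) + sorensenSim n γ X (symmDiff X B)) :=
  ⟨⟨3, {0}, {1}, {2}, sorensenSim_symmDiff_add_lt_of_disjoint h0 (by decide) (by decide)
      (by decide) (by decide) (by decide) (by decide)⟩,
    ⟨2, {0} ∪ {1}, {0}, {1}, sorensenSim_symmDiff_add_lt_of_partition h0.le h1 (by decide)
      (by decide) (by decide)⟩⟩
end

section
/- For every γ ≥ 1, the Sokal–Sneath_γ similarity S(X,Y) = (|V| − |X △ Y|) / (|V| + (γ−1)|X △ Y|) is supermodular with respect to the symmetric difference: for every fixed X ⊆ V, the set function f_X : A ↦ S(X, X △ A) is supermodular. -/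
/-!
Since `X △ (X △ A) = A`, the set function `A ↦ S(X, X △ A)` is `φ (|A|)` with
`φ d = (n - d) / (n + (γ - 1) d)`. The secant slopes of `φ` are `-n γ / ((n + (γ - 1) x) (n + (γ - 1) y))`,
which increase with `x` and `y` when `γ ≥ 1`, so `φ` is convex on `[0, ∞)`. A convex function of the
cardinality is supermodular: `|A|` and `|B|` lie between `|A ∩ B|` and `|A ∪ B|` and have the same sum.
-/

open Finset

theorem ConvexOn.map_add_map_le_of_add_eq {𝕜 β : Type*} [Field 𝕜] [LinearOrder 𝕜]
    [IsStrictOrderedRing 𝕜] [AddCommGroup β] [PartialOrder β] [IsOrderedAddMonoid β]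
    [Module 𝕜 β] [PosSMulMono 𝕜 β] {s : Set 𝕜} {f : 𝕜 → β} (hf : ConvexOn 𝕜 s f)
    {i u a b : 𝕜} (hi : i ∈ s) (hu : u ∈ s) (hia : i ≤ a) (hau : a ≤ u) (hsum : a + b = i + u) :
    f a + f b ≤ f i + f u := by
  rcases hia.eq_or_lt with rfl | hia
  · rw [show b = u by linear_combination hsum]
  -- `a` and `b` are the convex combinations of `i` and `u` with swapped weights
  set t := (u - a) / (u - i)
  have hiu : 0 < u - i := by linarith
  have ht₀ : 0 ≤ t := div_nonneg (by linarith) hiu.le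
  have ht₁ : 0 ≤ 1 - t := by rw [sub_nonneg, div_le_one hiu]; linarith
  have ha : t • i + (1 - t) • u = a := by
    simp only [smul_eq_mul, t]; field_simp; ring
  have hb : (1 - t) • i + t • u = b := by
    simp only [smul_eq_mul, t]
    rw [show b = i + u - a by linear_combination hsum]
    field_simp; ring
  calc f a + f b
      ≤ (t • f i + (1 - t) • f u) + ((1 - t) • f i + t • f u) := by
        rw [← ha, ← hb]
        exact add_le_add (hf.2 hi hu ht₀ ht₁ (by ring)) (hf.2 hi hu ht₁ ht₀ (by ring))
    _ = f i + f u := by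
        rw [add_add_add_comm, ← add_smul, ← add_smul, add_sub_cancel, sub_add_cancel, one_smul,
          one_smul]

def Supermodular {α β : Type*} [DecidableEq α] [Add β] [LE β] (g : Finset α → β) : Prop :=
  ∀ A B, g A + g B ≤ g (A ∪ B) + g (A ∩ B)

theorem ConvexOn.supermodular_comp_card {α : Type*} [DecidableEq α] {φ : ℝ → ℝ}
    (hφ : ConvexOn ℝ (Set.Ici 0) φ) : Supermodular fun A : Finset α ↦ φ #A := by
  intro A B
  have hsum : (#A : ℝ) + #B = #(A ∩ B) + #(A ∪ B) := by
    exact_mod_cast (card_inter_add_card_union A B).symm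
  rw [add_comm (φ #(A ∪ B))]
  exact hφ.map_add_map_le_of_add_eq (Set.mem_Ici.2 (Nat.cast_nonneg _))
    (Set.mem_Ici.2 (Nat.cast_nonneg _)) (by gcongr; exact inter_subset_left)
    (by gcongr; exact subset_union_left) hsum

/-- `S(X, Y)` for `|V| = n`, `|X △ Y| = d` and `γ = 1 + c`. -/
noncomputable def sokalSneath (n c d : ℝ) : ℝ := (n - d) / (n + c * d)

theorem sokalSneath_slope {n c x y : ℝ} (hx : 0 < n + c * x) (hy : 0 < n + c * y) (hxy : x ≠ y) :
    (sokalSneath n c y - sokalSneath n c x) / (y - x) =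
      -(n * (1 + c)) / ((n + c * x) * (n + c * y)) := by
  unfold sokalSneath
  rw [div_sub_div _ _ hy.ne' hx.ne', div_div,
    div_eq_div_iff (by have := sub_ne_zero.2 hxy.symm; positivity) (by positivity)]
  ring

theorem convexOn_sokalSneath {n c : ℝ} (hn : 0 < n) (hc : 0 ≤ c) :
    ConvexOn ℝ (Set.Ici 0) (sokalSneath n c) := by
  have hpos : ∀ x : ℝ, 0 ≤ x → 0 < n + c * x := fun x hx ↦ by positivity
  refine convexOn_of_slope_mono_adjacent (convex_Ici 0) fun {x y z} hx hz hxy hyz ↦ ?_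
  have hy : (0 : ℝ) ≤ y := le_trans hx hxy.le
  rw [sokalSneath_slope (hpos x hx) (hpos y hy) hxy.ne,
    sokalSneath_slope (hpos y hy) (hpos z hz) hyz.ne, neg_div, neg_div, neg_le_neg_iff]
  gcongr
  exact mul_pos (hpos x hx) (hpos y hy)

/-- The Sokal–Sneath_γ similarity is supermodular w.r.t. the symmetric difference for γ ≥ 1. -/
theorem sokal_sneath_gamma_supermodular {V : Type*} [Fintype V] [DecidableEq V] [Nonempty V]
    (γ : ℝ) (hγ : 1 ≤ γ)
    (S : Finset V → Finset V → ℝ)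
    (hS : ∀ X Y : Finset V,
      S X Y = ((Finset.univ : Finset V).card - (symmDiff X Y).card) /
        ((Finset.univ : Finset V).card + (γ - 1) * (symmDiff X Y).card))
    (X : Finset V) :
    ∀ A B : Finset V,
      S X (symmDiff X (A ∪ B)) + S X (symmDiff X (A ∩ B)) ≥
        S X (symmDiff X A) + S X (symmDiff X B) := by
  have hS_cancel (A : Finset V) :
      S X (symmDiff X A) = sokalSneath #(univ : Finset V) (γ - 1) #A := by
    rw [hS, symmDiff_symmDiff_cancel_left]; rfl
  have hconv := convexOn_sokalSneath (n := #(univ : Finset V)) (c := γ - 1)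
    (by exact_mod_cast card_pos.2 univ_nonempty) (by linarith)
  intro A B
  rw [ge_iff_le, hS_cancel, hS_cancel, hS_cancel, hS_cancel]
  exact hconv.supermodular_comp_card A B
end

section
/- For every 0 < γ < 1, the Sokal–Sneath_γ similarity S(X,Y) = (|V| − |X △ Y|) / (|V| + (γ−1)|X △ Y|) is submodular with respect to the symmetric difference: for every fixed X ⊆ V, the set function f_X : A ↦ S(X, X △ A) is submodular. -/
/-!
Since `X △ (X △ A) = A`, the function `A ↦ S(X, X △ A)` is `φ (#A)` with
`φ t = (n - t) / (n + (γ - 1) t) = 1 / (1 - γ) - (n γ / (1 - γ)) / (n - (1 - γ) t)`, `n = |V|`.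
For `0 < γ < 1` the denominator `n - (1 - γ) t` is a positive affine function on `[0, n]`, so `φ`
is concave there. A concave function of the cardinality is submodular: `#(A ∩ B) ≤ #A, #B ≤ #(A ∪ B)`
and the two pairs have the same sum.
-/

open Finset

lemma ConcaveOn.map_add_map_le_of_add_eq {s : Set ℝ} {φ : ℝ → ℝ} (hφ : ConcaveOn ℝ s φ)
    {a p q u : ℝ} (ha : a ∈ s) (hu : u ∈ s) (hap : a ≤ p) (hpu : p ≤ u) (hsum : p + q = a + u) :
    φ a + φ u ≤ φ p + φ q := by
  rcases hap.eq_or_lt with rfl | hap'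
  · obtain rfl : q = u := by linarith
    rfl
  have hua : u - a ≠ 0 := by linarith
  -- `p` and `q` are the convex combinations of `a` and `u` with swapped weights `θ`, `1 - θ`.
  set θ := (u - p) / (u - a)
  have hθ0 : 0 ≤ θ := div_nonneg (by linarith) (by linarith)
  have hθ1 : 0 ≤ 1 - θ := by
    rw [sub_nonneg, div_le_one (by linarith)]; linarith
  have hp : θ • a + (1 - θ) • u = p := by
    simp only [smul_eq_mul, θ]; field_simp; ring
  have hq : (1 - θ) • a + θ • u = q := by
    rw [show q = a + u - p by linarith]; simp only [smul_eq_mul, θ]; field_simp; ring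
  have hφp : θ * φ a + (1 - θ) * φ u ≤ φ p := hp ▸ hφ.2 ha hu hθ0 hθ1 (by ring)
  have hφq : (1 - θ) * φ a + θ * φ u ≤ φ q := hq ▸ hφ.2 ha hu hθ1 hθ0 (by ring)
  linarith

lemma ConcaveOn.map_card_union_add_map_card_inter_le {α : Type*} [DecidableEq α] {N : ℝ}
    {φ : ℝ → ℝ} (hφ : ConcaveOn ℝ (Set.Icc 0 N) φ) (A B : Finset α) (hN : (#(A ∪ B) : ℝ) ≤ N) :
    φ #(A ∪ B) + φ #(A ∩ B) ≤ φ #A + φ #B := by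
  have hcard : (#A : ℝ) + #B = #(A ∩ B) + #(A ∪ B) := by
    rw [add_comm (#(A ∩ B) : ℝ)]; exact_mod_cast (card_union_add_card_inter A B).symm
  have hinter : (#(A ∩ B) : ℝ) ≤ #(A ∪ B) := by
    exact_mod_cast card_le_card (inter_subset_left.trans subset_union_left)
  rw [add_comm (φ _)]
  exact hφ.map_add_map_le_of_add_eq ⟨by positivity, hinter.trans hN⟩ ⟨by positivity, hN⟩
    (by exact_mod_cast card_le_card inter_subset_left)
    (by exact_mod_cast card_le_card subset_union_left) hcard

lemma concaveOn_sokalSneath {n γ : ℝ} (hn : 0 < n) (h0 : 0 < γ) (h1 : γ < 1) :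
    ConcaveOn ℝ (Set.Icc 0 n) fun t => (n - t) / (n + (γ - 1) * t) := by
  set D : ℝ →ᵃ[ℝ] ℝ := AffineMap.const ℝ ℝ n + (γ - 1) • AffineMap.id ℝ ℝ
  have hD : ∀ t, D t = n + (γ - 1) * t := fun t => rfl
  have hDpos : ∀ t ∈ Set.Icc 0 n, 0 < D t := fun t ⟨_, htn⟩ => by
    rw [hD]; nlinarith
  have hconvex : ConvexOn ℝ (Set.Icc 0 n) fun t => (D t)⁻¹ :=
    ((convexOn_zpow (-1)).comp_affineMap D).subset hDpos (convex_Icc 0 n) |>.congr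
      fun t _ => by simp
  have h1γ : 0 < 1 - γ := by linarith
  refine ((concaveOn_const (1 / (1 - γ)) (convex_Icc 0 n)).sub
    (hconvex.smul (c := n * γ / (1 - γ)) (by positivity))).congr fun t ht => ?_
  have hDt := (hDpos t ht).ne'
  rw [hD] at hDt
  simp only [Pi.sub_apply, smul_eq_mul, hD]
  field_simp
  ring

/-- The Sokal–Sneath_γ similarity is submodular w.r.t. the symmetric difference for 0 < γ < 1. -/
theorem sokal_sneath_gamma_submodular {V : Type*} [Fintype V] [DecidableEq V] [Nonempty V]
    (γ : ℝ) (h0 : 0 < γ) (h1 : γ < 1)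
    (S : Finset V → Finset V → ℝ)
    (hS : ∀ X Y : Finset V,
      S X Y = ((Finset.univ : Finset V).card - (symmDiff X Y).card) /
        ((Finset.univ : Finset V).card + (γ - 1) * (symmDiff X Y).card))
    (X : Finset V) :
    ∀ A B : Finset V,
      S X (symmDiff X (A ∪ B)) + S X (symmDiff X (A ∩ B)) ≤
        S X (symmDiff X A) + S X (symmDiff X B) := by
  intro A B
  simp only [hS, symmDiff_symmDiff_cancel_left]
  have hn : (0 : ℝ) < #(univ : Finset V) := by exact_mod_cast univ_nonempty.card_pos
  exact (concaveOn_sokalSneath hn h0 h1).map_card_union_add_map_card_inter_le A B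
    (by exact_mod_cast card_le_univ _)
end

section
/- The Braun–Blanquet similarity S(X,Y) = |X ∩ Y| / max(|X|,|Y|) is neither submodular nor supermodular with respect to the symmetric difference: there exist a finite base set V, a set X ⊆ V, and configurations witnessing violation of submodularity and of supermodularity of f_X : A ↦ S(X, X △ A). -/
/-!
With `f_X(A) = S(X, X ∆ A) = |X \ A| / max(|X|, |X \ A| + |A \ X|)`, two configurations on three
points suffice. For `X = {0}`, `A = {1}`, `B = {2}` the values are `f(A) = f(B) = 1/2`,
`f(A ∪ B) = 1/3`, `f(A ∩ B) = f(∅) = 1`, so `4/3 > 1`. For `X = {0, 1}`, `A = {0, 2}`, `B = {1, 2}`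
they are `f(A) = f(B) = 1/2`, `f(A ∪ B) = 0`, `f(A ∩ B) = 2/3`, so `2/3 < 1`.
-/

open Finset

noncomputable def braunBlanquetSim (n : ℕ) (X Y : Finset (Fin n)) : ℝ :=
  (X ∩ Y).card / (max X.card Y.card)

namespace Finset

variable {α : Type*} [DecidableEq α]

theorem inter_symmDiff_self_left (s t : Finset α) : s ∩ symmDiff s t = s \ t := by
  ext
  simp only [mem_inter, mem_symmDiff, mem_sdiff]
  tauto

theorem card_symmDiff (s t : Finset α) : #(symmDiff s t) = #(s \ t) + #(t \ s) := by
  rw [symmDiff_def, sup_eq_union, card_union_of_disjoint disjoint_sdiff_sdiff]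

end Finset

theorem braunBlanquetSim_symmDiff_right {n : ℕ} (X A : Finset (Fin n)) :
    braunBlanquetSim n X (symmDiff X A) = #(X \ A) / max (#X : ℝ) (#(X \ A) + #(A \ X)) := by
  rw [braunBlanquetSim, inter_symmDiff_self_left, card_symmDiff]
  push_cast
  rfl

/-- The Braun–Blanquet similarity is neither submodular nor supermodular w.r.t. the
symmetric difference. -/
theorem braun_blanquet_neither_sub_nor_supermodular :
    (∃ (n : ℕ) (X A B : Finset (Fin n)), X.Nonempty ∧
      (symmDiff X A).Nonempty ∧ (symmDiff X B).Nonempty ∧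
      (symmDiff X (A ∪ B)).Nonempty ∧ (symmDiff X (A ∩ B)).Nonempty ∧
      braunBlanquetSim n X (symmDiff X (A ∪ B)) + braunBlanquetSim n X (symmDiff X (A ∩ B)) >
        braunBlanquetSim n X (symmDiff X A) + braunBlanquetSim n X (symmDiff X B)) ∧
    (∃ (n : ℕ) (X A B : Finset (Fin n)), X.Nonempty ∧
      (symmDiff X A).Nonempty ∧ (symmDiff X B).Nonempty ∧
      (symmDiff X (A ∪ B)).Nonempty ∧ (symmDiff X (A ∩ B)).Nonempty ∧
      braunBlanquetSim n X (symmDiff X (A ∪ B)) + braunBlanquetSim n X (symmDiff X (A ∩ B)) <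
        braunBlanquetSim n X (symmDiff X A) + braunBlanquetSim n X (symmDiff X B)) := by
  constructor
  · refine ⟨3, {0}, {1}, {2}, by decide, by decide, by decide, by decide, by decide, ?_⟩
    norm_num +decide [braunBlanquetSim_symmDiff_right, sdiff_eq_filter, filter_insert, filter_singleton]
  · refine ⟨3, {0, 1}, {0, 2}, {1, 2}, by decide, by decide, by decide, by decide, by decide, ?_⟩
    norm_num +decide [braunBlanquetSim_symmDiff_right, sdiff_eq_filter, filter_insert, filter_singleton]
end

section
/- The Forbes similarity S(X,Y) = |V|·|X ∩ Y| / (|X|·|Y|) is neither submodular nor supermodular with respect to the symmetric difference: there exist a finite base set V, a set X ⊆ V, and configurations witnessing violation of submodularity and of supermodularity of f_X : A ↦ S(X, X △ A). -/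
open Finset

/-!
Write `f A = S(X, X ∆ A)`. When `A` is disjoint from `X`, `X ∆ A = X ∪ A` contains `X`, so
`f A = |V| / (|X| + |A|)`; for pairwise disjoint nonempty `X, A, B` the strict convexity of
`t ↦ 1 / t` gives `f A + f B < f (A ∪ B) + f ∅`. When instead `∅ ≠ A ⊂ X` and `B` is disjoint
from `X`, one has `f A = f ∅ = |V| / |X|` while `f (A ∪ B) < f B`, so the inequality reverses.
-/

/-- The Forbes similarity. -/
noncomputable def forbesSim (n : ℕ) (X Y : Finset (Fin n)) : ℝ :=
  ((Finset.univ : Finset (Fin n)).card * (X ∩ Y).card) / (X.card * Y.card)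

lemma one_div_add_one_div_lt {x a b : ℝ} (hx : 0 < x) (ha : 0 < a) (hb : 0 < b) :
    1 / (x + a) + 1 / (x + b) < 1 / (x + a + b) + 1 / x := by
  rw [div_add_div _ _ (by positivity) (by positivity),
    div_add_div _ _ (by positivity) (by positivity), div_lt_div_iff₀ (by positivity) (by positivity)]
  nlinarith [mul_pos (mul_pos ha hb) (by positivity : 0 < 2 * x + a + b)]

lemma Finset.inter_symmDiff_self {α : Type*} [DecidableEq α] (s t : Finset α) :
    s ∩ symmDiff s t = s \ t := by
  ext; simp only [mem_inter, mem_symmDiff, mem_sdiff]; tauto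

lemma Finset.card_symmDiff_eq {α : Type*} [DecidableEq α] (s t : Finset α) :
    #(symmDiff s t) = #(s \ t) + #(t \ s) := by
  rw [symmDiff_def, sup_eq_union, card_union_of_disjoint disjoint_sdiff_sdiff]

section
variable {n : ℕ} {X A B : Finset (Fin n)}

lemma forbesSim_symmDiff (X A : Finset (Fin n)) :
    forbesSim n X (symmDiff X A) = n * #(X \ A) / (#X * (#(X \ A) + #(A \ X))) := by
  rw [forbesSim, inter_symmDiff_self, card_symmDiff_eq, card_univ, Fintype.card_fin]
  push_cast; rfl

lemma forbesSim_symmDiff_of_disjoint (hX : X.Nonempty) (h : Disjoint X A) :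
    forbesSim n X (symmDiff X A) = n / (#X + #A) := by
  have hx : (#X : ℝ) ≠ 0 := by exact_mod_cast hX.card_ne_zero
  rw [forbesSim_symmDiff, sdiff_eq_self_of_disjoint h, sdiff_eq_self_of_disjoint h.symm]
  field_simp

lemma forbesSim_symmDiff_of_ssubset (h : A ⊂ X) :
    forbesSim n X (symmDiff X A) = n / #X := by
  have hc : (#(X \ A) : ℝ) ≠ 0 := by exact_mod_cast (sdiff_nonempty.2 h.2).card_ne_zero
  rw [forbesSim_symmDiff, sdiff_eq_empty_iff_subset.2 h.1, card_empty, Nat.cast_zero, add_zero]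
  field_simp

lemma Finset.Nonempty.natCast_pos_of_fin (hX : X.Nonempty) : (0 : ℝ) < n := by
  obtain ⟨i, -⟩ := hX
  exact_mod_cast i.pos

theorem forbesSim_symmDiff_add_lt_of_disjoint (hX : X.Nonempty) (hA : A.Nonempty)
    (hB : B.Nonempty) (hXA : Disjoint X A) (hXB : Disjoint X B) (hAB : Disjoint A B) :
    forbesSim n X (symmDiff X A) + forbesSim n X (symmDiff X B) <
      forbesSim n X (symmDiff X (A ∪ B)) + forbesSim n X (symmDiff X (A ∩ B)) := by
  rw [forbesSim_symmDiff_of_disjoint hX hXA, forbesSim_symmDiff_of_disjoint hX hXB,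
    forbesSim_symmDiff_of_disjoint hX (disjoint_union_right.2 ⟨hXA, hXB⟩),
    disjoint_iff_inter_eq_empty.1 hAB, forbesSim_symmDiff_of_ssubset hX.empty_ssubset,
    card_union_of_disjoint hAB, Nat.cast_add, ← add_assoc]
  simpa only [mul_add, mul_one_div] using mul_lt_mul_of_pos_left
    (one_div_add_one_div_lt (x := #X) (a := #A) (b := #B) (by exact_mod_cast hX.card_pos)
      (by exact_mod_cast hA.card_pos) (by exact_mod_cast hB.card_pos)) hX.natCast_pos_of_fin

theorem forbesSim_symmDiff_union_add_lt_of_ssubset (hA : A.Nonempty) (hAX : A ⊂ X)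
    (hB : B.Nonempty) (hXB : Disjoint X B) :
    forbesSim n X (symmDiff X (A ∪ B)) + forbesSim n X (symmDiff X (A ∩ B)) <
      forbesSim n X (symmDiff X A) + forbesSim n X (symmDiff X B) := by
  have hX : X.Nonempty := hA.mono hAX.1
  have hAB : A ∩ B = ∅ := disjoint_iff_inter_eq_empty.1 (hXB.mono_left hAX.1)
  have hXAB : X \ (A ∪ B) = X \ A := by
    rw [sdiff_union_distrib, sdiff_eq_self_of_disjoint hXB, inter_eq_left.2 sdiff_subset]
  have hABX : (A ∪ B) \ X = B := by
    rw [union_sdiff_distrib, sdiff_eq_empty_iff_subset.2 hAX.1, empty_union,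
      sdiff_eq_self_of_disjoint hXB.symm]
  have hlt : (#(X \ A) : ℝ) < #X := by exact_mod_cast card_lt_card (sdiff_ssubset hAX.1 hA)
  rw [hAB, forbesSim_symmDiff_of_ssubset hX.empty_ssubset, forbesSim_symmDiff_of_ssubset hAX,
    forbesSim_symmDiff_of_disjoint hX hXB, forbesSim_symmDiff, hXAB, hABX, add_comm,
    add_lt_add_iff_left, div_lt_div_iff₀ (by positivity) (by positivity)]
  nlinarith [mul_pos hX.natCast_pos_of_fin (by exact_mod_cast hB.card_pos : (0 : ℝ) < #B)]
end

/-- The Forbes similarity is neither submodular nor supermodular w.r.t. the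
symmetric difference. -/
theorem forbes_neither_sub_nor_supermodular :
    (∃ (n : ℕ) (X A B : Finset (Fin n)), X.Nonempty ∧
      (symmDiff X A).Nonempty ∧ (symmDiff X B).Nonempty ∧
      (symmDiff X (A ∪ B)).Nonempty ∧ (symmDiff X (A ∩ B)).Nonempty ∧
      forbesSim n X (symmDiff X (A ∪ B)) + forbesSim n X (symmDiff X (A ∩ B)) >
        forbesSim n X (symmDiff X A) + forbesSim n X (symmDiff X B)) ∧
    (∃ (n : ℕ) (X A B : Finset (Fin n)), X.Nonempty ∧
      (symmDiff X A).Nonempty ∧ (symmDiff X B).Nonempty ∧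
      (symmDiff X (A ∪ B)).Nonempty ∧ (symmDiff X (A ∩ B)).Nonempty ∧
      forbesSim n X (symmDiff X (A ∪ B)) + forbesSim n X (symmDiff X (A ∩ B)) <
        forbesSim n X (symmDiff X A) + forbesSim n X (symmDiff X B)) := by
  constructor
  · refine ⟨3, {0}, {1}, {2}, by decide, by decide, by decide, by decide, by decide, ?_⟩
    exact forbesSim_symmDiff_add_lt_of_disjoint (by decide) (by decide) (by decide) (by decide)
      (by decide) (by decide)
  · refine ⟨3, {0, 1}, {0}, {2}, by decide, by decide, by decide, by decide, by decide, ?_⟩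
    exact forbesSim_symmDiff_union_add_lt_of_ssubset (by decide) (by decide) (by decide) (by decide)
end

section
/- Equivalently: if f : P(V) → ℝ is supermodular, monotone nonincreasing, nonnegative, and f(∅) = 1, then for all X, Y, Z ⊆ V, f(X △ Y) + f(Y △ Z) ≤ f(X △ Z) + 1. -/
open Finset

section Supermodular

variable {α β : Type*} [AddCommMonoid β] [PartialOrder β] [IsOrderedAddMonoid β] {f : α → β}

theorem add_le_sup_add_bot_of_supermodular [Lattice α] [OrderBot α]
    (hsuper : ∀ a b, f a + f b ≤ f (a ⊔ b) + f (a ⊓ b)) (hanti : Antitone f) (a b : α) :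
    f a + f b ≤ f (a ⊔ b) + f ⊥ :=
  (hsuper a b).trans (add_le_add le_rfl (hanti bot_le))

theorem symmDiff_triangle_of_supermodular [GeneralizedBooleanAlgebra α]
    (hsuper : ∀ a b, f a + f b ≤ f (a ⊔ b) + f (a ⊓ b)) (hanti : Antitone f) (x y z : α) :
    f (symmDiff x y) + f (symmDiff y z) ≤ f (symmDiff x z) + f ⊥ :=
  (add_le_sup_add_bot_of_supermodular hsuper hanti _ _).trans
    (add_le_add (hanti (symmDiff_triangle x y z)) le_rfl)

end Supermodular

theorem supermodular_similarity_triangle_general {V : Type*} [DecidableEq V]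
    (f : Finset V → ℝ)
    (hsuper : ∀ A B : Finset V, f (A ∪ B) + f (A ∩ B) ≥ f A + f B)
    (hmono : ∀ A B : Finset V, A ⊆ B → f B ≤ f A)
    (hempty : f ∅ = 1) :
    ∀ X Y Z : Finset V,
      f (symmDiff X Y) + f (symmDiff Y Z) ≤ f (symmDiff X Z) + 1 := by
  intro X Y Z
  have htriangle := symmDiff_triangle_of_supermodular hsuper (fun A B ↦ hmono A B) X Y Z
  rwa [bot_eq_empty, hempty] at htriangle

/-- Supermodular, nonincreasing, nonnegative f with f(∅) = 1 satisfies
f(X △ Y) + f(Y △ Z) ≤ f(X △ Z) + 1. -/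
theorem supermodular_similarity_triangle {V : Type*} [Fintype V] [DecidableEq V]
    (f : Finset V → ℝ)
    (hsuper : ∀ A B : Finset V, f (A ∪ B) + f (A ∩ B) ≥ f A + f B)
    (hmono : ∀ A B : Finset V, A ⊆ B → f B ≤ f A)
    (hnonneg : ∀ A : Finset V, 0 ≤ f A)
    (hempty : f ∅ = 1) :
    ∀ X Y Z : Finset V,
      f (symmDiff X Y) + f (symmDiff Y Z) ≤ f (symmDiff X Z) + 1 :=
  supermodular_similarity_triangle_general f hsuper hmono hempty
end

section
/- If g : P(V) → [0,1] is a nonnegative, monotone nonincreasing, supermodular set function with g(∅) = 1, then for every nonnegative integer n, the pointwise power gⁿ is also nonnegative, monotone nonincreasing, supermodular, and satisfies gⁿ(∅) = 1. -/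
section
variable {R : Type*} [CommRing R] [LinearOrder R] [IsStrictOrderedRing R]

/-- A majorization inequality: `t ↦ tⁿ` is convex and monotone on `[0, ∞)`. -/
theorem add_pow_le_add_pow_of_le_of_add_le {x y a b : R} (hy : 0 ≤ y) (hya : y ≤ a)
    (hyb : y ≤ b) (hax : a ≤ x) (hbx : b ≤ x) (hsum : a + b ≤ x + y) (n : ℕ) :
    a ^ n + b ^ n ≤ x ^ n + y ^ n := by
  induction n with
  | zero => simp
  | succ n ih =>
    have hx : 0 ≤ x := hy.trans (hya.trans hax)
    have hyn : 0 ≤ y ^ n := pow_nonneg hy n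
    have defect : (x - y) * y ^ n ≤ (x - a) * a ^ n + (x - b) * b ^ n :=
      calc (x - y) * y ^ n ≤ ((x - a) + (x - b)) * y ^ n :=
            mul_le_mul_of_nonneg_right (by linarith) hyn
        _ = (x - a) * y ^ n + (x - b) * y ^ n := add_mul _ _ _
        _ ≤ (x - a) * a ^ n + (x - b) * b ^ n := by gcongr
    calc a ^ (n + 1) + b ^ (n + 1)
        = x * (a ^ n + b ^ n) - ((x - a) * a ^ n + (x - b) * b ^ n) := by ring
      _ ≤ x * (x ^ n + y ^ n) - (x - y) * y ^ n :=
          sub_le_sub (mul_le_mul_of_nonneg_left ih hx) defect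
      _ = x ^ (n + 1) + y ^ (n + 1) := by ring

theorem Antitone.supermodular_pow {α : Type*} [Lattice α] {g : α → R} (hg : Antitone g)
    (hnonneg : ∀ a, 0 ≤ g a) (hsuper : ∀ a b, g a + g b ≤ g (a ⊔ b) + g (a ⊓ b)) (n : ℕ)
    (a b : α) : g a ^ n + g b ^ n ≤ g (a ⊔ b) ^ n + g (a ⊓ b) ^ n := by
  rw [add_comm (g (a ⊔ b) ^ n)]
  exact add_pow_le_add_pow_of_le_of_add_le (hnonneg _) (hg le_sup_left) (hg le_sup_right)
    (hg inf_le_left) (hg inf_le_right) ((hsuper a b).trans_eq (add_comm _ _)) n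

end

theorem pow_supermodular_general {V : Type*} [DecidableEq V]
    (g : Finset V → ℝ)
    (hrange : ∀ A : Finset V, 0 ≤ g A ∧ g A ≤ 1)
    (hmono : ∀ A B : Finset V, A ⊆ B → g B ≤ g A)
    (hsuper : ∀ A B : Finset V, g (A ∪ B) + g (A ∩ B) ≥ g A + g B)
    (hempty : g ∅ = 1) :
    ∀ n : ℕ,
      (∀ A : Finset V, 0 ≤ (g A) ^ n) ∧
      (∀ A B : Finset V, A ⊆ B → (g B) ^ n ≤ (g A) ^ n) ∧
      (∀ A B : Finset V, (g (A ∪ B)) ^ n + (g (A ∩ B)) ^ n ≥ (g A) ^ n + (g B) ^ n) ∧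
      (g ∅) ^ n = 1 := by
  have hnonneg A : 0 ≤ g A := (hrange A).1
  have hanti : Antitone g := fun A B hAB => hmono A B hAB
  intro n
  exact ⟨fun A => pow_nonneg (hnonneg A) n,
    fun A B hAB => pow_le_pow_left₀ (hnonneg B) (hmono A B hAB) n,
    hanti.supermodular_pow hnonneg hsuper n,
    by rw [hempty, one_pow]⟩

/-- Powers of a nonnegative, nonincreasing, supermodular set function with
g(∅) = 1 and values in [0,1] retain all these properties. -/
theorem pow_supermodular {V : Type*} [Fintype V] [DecidableEq V]
    (g : Finset V → ℝ)
    (hrange : ∀ A : Finset V, 0 ≤ g A ∧ g A ≤ 1)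
    (hmono : ∀ A B : Finset V, A ⊆ B → g B ≤ g A)
    (hsuper : ∀ A B : Finset V, g (A ∪ B) + g (A ∩ B) ≥ g A + g B)
    (hempty : g ∅ = 1) :
    ∀ n : ℕ,
      (∀ A : Finset V, 0 ≤ (g A) ^ n) ∧
      (∀ A B : Finset V, A ⊆ B → (g B) ^ n ≤ (g A) ^ n) ∧
      (∀ A B : Finset V, (g (A ∪ B)) ^ n + (g (A ∩ B)) ^ n ≥ (g A) ^ n + (g B) ^ n) ∧
      (g ∅) ^ n = 1 :=
  pow_supermodular_general g hrange hmono hsuper hempty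
end

section
/- Let f(x) = Σᵢ pᵢ xⁱ be a power series with pᵢ ≥ 0 and Σᵢ pᵢ ≤ 1 (an LSH-preserving function, i.e., a nonnegative multiple of a probability generating function), and let g : P(V) → [0,1] be supermodular, monotone nonincreasing, nonnegative with g(∅) = 1. Then f ∘ g is supermodular, monotone nonincreasing, with values in [0,1]. -/
/-!
A power series with nonnegative coefficients is monotone and convex on `[0, 1]`, and a
monotone convex function `φ` satisfies `φ a + φ b ≤ φ u + φ v` whenever `u ≤ a, b` and
`a + b ≤ u + v`.
Supermodularity and antitonicity of `g` put `u = g (A ∪ B)`, `a = g A`, `b = g B`,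
`v = g (A ∩ B)` in exactly this position.
-/

open Finset

section Convex

variable {s : Set ℝ} {φ : ℝ → ℝ} {u a b v : ℝ}

theorem ConvexOn.map_add_map_le_of_add_eq_s16 (hφ : ConvexOn ℝ s φ) (hu : u ∈ s) (hv : v ∈ s)
    (hua : u ≤ a) (hav : a ≤ v) (hsum : a + b = u + v) : φ a + φ b ≤ φ u + φ v := by
  rcases hua.trans hav |>.eq_or_lt with rfl | huv
  · obtain rfl : a = u := le_antisymm hav hua
    obtain rfl : b = a := by linarith
    rfl
  -- `a` and `b` are the convex combinations of `u, v` with swapped weights `t, 1 - t`.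
  set t := (v - a) / (v - u)
  have ht₀ : 0 ≤ t := div_nonneg (by linarith) (by linarith)
  have ht₁ : 0 ≤ 1 - t := by
    rw [sub_nonneg, div_le_one (by linarith)]
    linarith
  have hta : t * (v - u) = v - a := div_mul_cancel₀ _ (by linarith)
  have ha : t • u + (1 - t) • v = a := by simp only [smul_eq_mul]; linear_combination -hta
  have hb : (1 - t) • u + t • v = b := by simp only [smul_eq_mul]; linear_combination hta - hsum
  have h₁ := hφ.2 hu hv ht₀ ht₁ (by ring)
  have h₂ := hφ.2 hu hv ht₁ ht₀ (by ring)
  rw [ha] at h₁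
  rw [hb] at h₂
  simp only [smul_eq_mul] at h₁ h₂
  linarith

theorem ConvexOn.map_add_map_le_of_add_le (hφ : ConvexOn ℝ s φ) (hφm : MonotoneOn φ s)
    (hu : u ∈ s) (hv : v ∈ s) (hua : u ≤ a) (hub : u ≤ b) (hsum : a + b ≤ u + v) :
    φ a + φ b ≤ φ u + φ v := by
  have hw : a + b - u ∈ s := hφ.1.ordConnected.out hu hv ⟨by linarith, by linarith⟩
  calc φ a + φ b ≤ φ u + φ (a + b - u) :=
        hφ.map_add_map_le_of_add_eq_s16 hu hw hua (by linarith) (by ring)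
    _ ≤ φ u + φ v := by gcongr; exact hφm hw hv (by linarith)

end Convex

section PowerSeries

open Set

variable {p : ℕ → ℝ} {x : ℝ}

theorem summable_mul_pow_of_mem_Icc (hp : ∀ i, 0 ≤ p i) (hpsum : Summable p)
    (hx : x ∈ Icc (0 : ℝ) 1) : Summable fun i => p i * x ^ i :=
  hpsum.of_nonneg_of_le (fun i => mul_nonneg (hp i) (pow_nonneg hx.1 i))
    fun i => mul_le_of_le_one_right (hp i) (pow_le_one₀ hx.1 hx.2)

theorem monotoneOn_tsum_mul_pow (hp : ∀ i, 0 ≤ p i) (hpsum : Summable p) :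
    MonotoneOn (fun x => ∑' i, p i * x ^ i) (Icc 0 1) := fun _ hx _ hy hxy =>
  Summable.tsum_le_tsum
    (fun i => mul_le_mul_of_nonneg_left (pow_le_pow_left₀ hx.1 hxy i) (hp i))
    (summable_mul_pow_of_mem_Icc hp hpsum hx) (summable_mul_pow_of_mem_Icc hp hpsum hy)

theorem convexOn_tsum_mul_pow (hp : ∀ i, 0 ≤ p i) (hpsum : Summable p) :
    ConvexOn ℝ (Icc 0 1) (fun x => ∑' i, p i * x ^ i) := by
  refine ⟨convex_Icc 0 1, fun x hx y hy a b ha hb hab => ?_⟩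
  have hxy : a • x + b • y ∈ Icc (0 : ℝ) 1 := convex_Icc 0 1 hx hy ha hb hab
  have hsx := summable_mul_pow_of_mem_Icc hp hpsum hx
  have hsy := summable_mul_pow_of_mem_Icc hp hpsum hy
  simp only [smul_eq_mul] at hxy ⊢
  rw [← hsx.tsum_mul_left, ← hsy.tsum_mul_left, ← (hsx.mul_left a).tsum_add (hsy.mul_left b)]
  refine Summable.tsum_le_tsum (fun i => ?_) (summable_mul_pow_of_mem_Icc hp hpsum hxy)
    ((hsx.mul_left a).add (hsy.mul_left b))
  have hpow := (convexOn_pow i).2 hx.1 hy.1 ha hb hab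
  simp only [smul_eq_mul] at hpow
  nlinarith [hp i]

end PowerSeries

theorem lsh_preserving_is_supermodular_preserving_general {V : Type*} [DecidableEq V]
    (p : ℕ → ℝ) (hp : ∀ i, 0 ≤ p i) (hpsum : Summable p) (hp1 : ∑' i, p i ≤ 1)
    (g : Finset V → ℝ)
    (hrange : ∀ A : Finset V, 0 ≤ g A ∧ g A ≤ 1)
    (hmono : ∀ A B : Finset V, A ⊆ B → g B ≤ g A)
    (hsuper : ∀ A B : Finset V, g (A ∪ B) + g (A ∩ B) ≥ g A + g B)
    (f : ℝ → ℝ) (hf : ∀ x : ℝ, f x = ∑' i, p i * x ^ i) :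
    (∀ A B : Finset V, f (g (A ∪ B)) + f (g (A ∩ B)) ≥ f (g A) + f (g B)) ∧
    (∀ A B : Finset V, A ⊆ B → f (g B) ≤ f (g A)) ∧
    (∀ A : Finset V, 0 ≤ f (g A) ∧ f (g A) ≤ 1) := by
  obtain rfl : f = fun x => ∑' i, p i * x ^ i := funext hf
  have hconv := convexOn_tsum_mul_pow hp hpsum
  have hfmono := monotoneOn_tsum_mul_pow hp hpsum
  have hmem : ∀ A, g A ∈ Set.Icc (0 : ℝ) 1 := hrange
  refine ⟨fun A B => ?_, fun A B hAB => hfmono (hmem B) (hmem A) (hmono A B hAB),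
    fun A => ⟨?_, ?_⟩⟩
  · exact hconv.map_add_map_le_of_add_le hfmono (hmem _) (hmem _)
      (hmono _ _ subset_union_left) (hmono _ _ subset_union_right) (hsuper A B)
  · exact tsum_nonneg fun i => mul_nonneg (hp i) (pow_nonneg (hmem A).1 i)
  · calc ∑' i, p i * g A ^ i ≤ ∑' i, p i * 1 ^ i :=
          hfmono (hmem A) ⟨zero_le_one, le_rfl⟩ (hmem A).2
      _ ≤ 1 := by simpa using hp1

/-- An LSH-preserving function (a nonnegative multiple of a probability
generating function) composed with a supermodular, nonincreasing, nonnegative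
set function g with g(∅) = 1 is supermodular, nonincreasing, with values in [0,1]. -/
theorem lsh_preserving_is_supermodular_preserving {V : Type*} [Fintype V] [DecidableEq V]
    (p : ℕ → ℝ) (hp : ∀ i, 0 ≤ p i) (hpsum : Summable p) (hp1 : ∑' i, p i ≤ 1)
    (g : Finset V → ℝ)
    (hrange : ∀ A : Finset V, 0 ≤ g A ∧ g A ≤ 1)
    (hmono : ∀ A B : Finset V, A ⊆ B → g B ≤ g A)
    (hsuper : ∀ A B : Finset V, g (A ∪ B) + g (A ∩ B) ≥ g A + g B)
    (hempty : g ∅ = 1)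
    (f : ℝ → ℝ) (hf : ∀ x : ℝ, f x = ∑' i, p i * x ^ i) :
    (∀ A B : Finset V, f (g (A ∪ B)) + f (g (A ∩ B)) ≥ f (g A) + f (g B)) ∧
    (∀ A B : Finset V, A ⊆ B → f (g B) ≤ f (g A)) ∧
    (∀ A : Finset V, 0 ≤ f (g A) ∧ f (g A) ≤ 1) :=
  lsh_preserving_is_supermodular_preserving_general p hp hpsum hp1 g hrange hmono hsuper f hf
end

section
/- The function f(x) = (3/2)x² − (1/2)x³ on [0,1] satisfies: (i) f is not expressible as α·Σᵢ pᵢ xⁱ with α ∈ [0,1], pᵢ ≥ 0, Σ pᵢ = 1 (i.e., f is not an LSH-preserving function), but (ii) f is convex composed with h(x) = 1 − x/n in the sense that x ↦ f(1 − x/n) is convex, nonincreasing, nonnegative on [0, n], and f(h(0)) = 1, for every positive integer n. -/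
/-!
(i) If `α • p` represents a function `g` on `[0, 1)`, then `q = α • p` is a nonnegative sequence
of total mass at most `1`. A vanishing value `g 0 = 0` kills `q 0`, and a quadratic bound
`g x ≤ K x²` near `0` kills `q 1`, so `g x = ∑_{i ≥ 2} qᵢ xⁱ ≤ x²`. The cubic violates this at
`x = 1/2`, where it equals `5/16 > 1/4`.

(ii) The cubic is convex, nondecreasing and nonnegative on `[0, 1]`, and `x ↦ 1 - x/n` maps
`[0, n]` onto `[0, 1]` affinely and decreasingly.
-/

open Set Filter Topology

section PowerSeries

variable {q : ℕ → ℝ} {x : ℝ}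

lemma summable_mul_pow_of_nonneg (hq : ∀ i, 0 ≤ q i) (hsum : Summable q)
    (hx0 : 0 ≤ x) (hx1 : x ≤ 1) : Summable fun i => q i * x ^ i :=
  hsum.of_nonneg_of_le (fun i => mul_nonneg (hq i) (pow_nonneg hx0 i))
    (fun i => mul_le_of_le_one_right (hq i) (pow_le_one₀ hx0 hx1))

lemma tsum_mul_zero_pow (q : ℕ → ℝ) : ∑' i, q i * (0 : ℝ) ^ i = q 0 := by
  rw [tsum_eq_single 0 fun i hi => by rw [zero_pow hi, mul_zero], pow_zero, mul_one]

lemma le_zero_of_forall_mul_le_sq {c K : ℝ} (h : ∀ x ∈ Ioo (0 : ℝ) 1, c * x ≤ K * x ^ 2) :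
    c ≤ 0 := by
  have hlim : Tendsto (fun x : ℝ => K * x) (𝓝[>] 0) (𝓝 0) := by
    simpa using ((continuous_const_mul K).tendsto 0).mono_left nhdsWithin_le_nhds
  refine ge_of_tendsto hlim ?_
  filter_upwards [Ioo_mem_nhdsGT one_pos] with x hx
  have hcx : c * x ≤ (K * x) * x := by nlinarith [h x hx]
  exact le_of_mul_le_mul_right hcx hx.1

lemma tsum_mul_pow_le_sq (hq : ∀ i, 0 ≤ q i) (hsum : Summable q) (hmass : ∑' i, q i ≤ 1)
    (h0 : q 0 = 0) (h1 : q 1 = 0) (hx0 : 0 ≤ x) (hx1 : x ≤ 1) :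
    ∑' i, q i * x ^ i ≤ x ^ 2 :=
  calc ∑' i, q i * x ^ i ≤ ∑' i, q i * x ^ 2 := by
        refine (summable_mul_pow_of_nonneg hq hsum hx0 hx1).tsum_le_tsum (fun i => ?_)
          (hsum.mul_right _)
        rcases i with _ | _ | k
        · simp [h0]
        · simp [h1]
        · exact mul_le_mul_of_nonneg_left (pow_le_pow_of_le_one hx0 hx1 (by omega)) (hq _)
    _ = (∑' i, q i) * x ^ 2 := tsum_mul_right
    _ ≤ x ^ 2 := mul_le_of_le_one_left (sq_nonneg x) hmass

lemma le_sq_of_eq_tsum {g : ℝ → ℝ} {K : ℝ} (hq : ∀ i, 0 ≤ q i) (hsum : Summable q)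
    (hmass : ∑' i, q i ≤ 1) (hg : ∀ x ∈ Ico (0 : ℝ) 1, g x = ∑' i, q i * x ^ i)
    (hg0 : g 0 = 0) (hgK : ∀ x ∈ Ioo (0 : ℝ) 1, g x ≤ K * x ^ 2) (hx : x ∈ Ico (0 : ℝ) 1) :
    g x ≤ x ^ 2 := by
  have h0 : q 0 = 0 := by
    rw [← tsum_mul_zero_pow q, ← hg 0 ⟨le_rfl, one_pos⟩, hg0]
  have h1 : q 1 = 0 := by
    refine le_antisymm (le_zero_of_forall_mul_le_sq (K := K) fun y hy => ?_) (hq 1)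
    have hy' : y ∈ Ico (0 : ℝ) 1 := Ioo_subset_Ico_self hy
    calc q 1 * y = q 1 * y ^ 1 := by rw [pow_one]
      _ ≤ ∑' i, q i * y ^ i :=
        (summable_mul_pow_of_nonneg hq hsum hy'.1 hy'.2.le).le_tsum 1
          fun j _ => mul_nonneg (hq j) (pow_nonneg hy'.1 j)
      _ = g y := (hg y hy').symm
      _ ≤ K * y ^ 2 := hgK y hy
  rw [hg x hx]
  exact tsum_mul_pow_le_sq hq hsum hmass h0 h1 hx.1 hx.2.le

end PowerSeries

lemma not_exists_eq_mul_tsum_of_sq_lt {g : ℝ → ℝ} {K x₀ : ℝ} (hg0 : g 0 = 0)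
    (hgK : ∀ x ∈ Ioo (0 : ℝ) 1, g x ≤ K * x ^ 2) (hx₀ : x₀ ∈ Ico (0 : ℝ) 1)
    (hgx₀ : x₀ ^ 2 < g x₀) :
    ¬ ∃ (α : ℝ) (p : ℕ → ℝ), 0 ≤ α ∧ α ≤ 1 ∧ (∀ i, 0 ≤ p i) ∧ Summable p ∧
        (∑' i, p i) = 1 ∧ ∀ x ∈ Ico (0 : ℝ) 1, g x = α * ∑' i, p i * x ^ i := by
  rintro ⟨α, p, hα0, hα1, hp, hsum, hmass, hg⟩
  have hrepr : ∀ x ∈ Ico (0 : ℝ) 1, g x = ∑' i, α * p i * x ^ i := fun x hx => by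
    simp_rw [mul_assoc]
    rw [tsum_mul_left, hg x hx]
  have hle := le_sq_of_eq_tsum (q := fun i => α * p i) (fun i => mul_nonneg hα0 (hp i))
    (hsum.mul_left α) (by rw [tsum_mul_left, hmass, mul_one]; exact hα1) hrepr hg0 hgK hx₀
  exact hle.not_gt hgx₀

section Hamming

variable {φ : ℝ → ℝ} {n : ℝ}

lemma mapsTo_one_sub_div_Icc (hn : 0 < n) :
    MapsTo (fun x => 1 - x / n) (Icc 0 n) (Icc (0 : ℝ) 1) := fun x hx =>
  ⟨by linarith [(div_le_one hn).2 hx.2], by linarith [div_nonneg hx.1 hn.le]⟩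

lemma ConvexOn.comp_one_sub_div (hφ : ConvexOn ℝ (Icc 0 1) φ) (hn : 0 < n) :
    ConvexOn ℝ (Icc 0 n) fun x => φ (1 - x / n) := by
  refine ⟨convex_Icc 0 n, fun x hx y hy a b ha hb hab => ?_⟩
  have hcombo : 1 - (a • x + b • y) / n = a • (1 - x / n) + b • (1 - y / n) := by
    simp only [smul_eq_mul]
    field_simp
    linear_combination -n * hab
  simpa only [hcombo] using
    hφ.2 (mapsTo_one_sub_div_Icc hn hx) (mapsTo_one_sub_div_Icc hn hy) ha hb hab

lemma MonotoneOn.antitoneOn_comp_one_sub_div (hφ : MonotoneOn φ (Icc 0 1)) (hn : 0 < n) :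
    AntitoneOn (fun x => φ (1 - x / n)) (Icc 0 n) := fun x hx y hy hxy =>
  hφ (mapsTo_one_sub_div_Icc hn hy) (mapsTo_one_sub_div_Icc hn hx)
    (by linarith [div_le_div_of_nonneg_right hxy hn.le])

end Hamming

lemma convexOn_cubic : ConvexOn ℝ (Icc 0 1) fun t : ℝ => 3 / 2 * t ^ 2 - 1 / 2 * t ^ 3 := by
  refine ⟨convex_Icc 0 1, fun u hu v hv a b ha hb hab => ?_⟩
  obtain rfl : b = 1 - a := by linarith
  simp only [smul_eq_mul]
  -- the Jensen gap factors as `a b (u - v)² (3 - u - v - (a u + b v)) / 2`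
  have hgap : 0 ≤ a * (1 - a) * (u - v) ^ 2 * (3 - u - v - (a * u + (1 - a) * v)) := by
    have : 0 ≤ 3 - u - v - (a * u + (1 - a) * v) := by
      nlinarith [hu.2, hv.2, mul_nonneg ha (sub_nonneg.2 hu.2),
        mul_nonneg hb (sub_nonneg.2 hv.2)]
    positivity
  linear_combination hgap / 2

lemma monotoneOn_cubic : MonotoneOn (fun t : ℝ => 3 / 2 * t ^ 2 - 1 / 2 * t ^ 3) (Icc 0 1) := by
  intro u hu v hv huv
  have hd : 0 ≤ v - u := sub_nonneg.2 huv
  nlinarith [mul_nonneg (mul_nonneg hd hu.1) (sub_nonneg.2 hu.2),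
    mul_nonneg (mul_nonneg hd hv.1) (sub_nonneg.2 hv.2),
    mul_nonneg (mul_nonneg hd hv.1) (sub_nonneg.2 hu.2)]

lemma cubic_nonneg {u : ℝ} (hu : u ∈ Icc (0 : ℝ) 1) : 0 ≤ 3 / 2 * u ^ 2 - 1 / 2 * u ^ 3 := by
  nlinarith [mul_nonneg (sq_nonneg u) (sub_nonneg.2 hu.2)]

/-- f(x) = (3/2)x² − (1/2)x³ is not LSH-preserving, yet composed with the
Hamming function h(x) = 1 − x/n it is convex, nonincreasing, nonnegative on
[0,n] with f(h(0)) = 1. -/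
theorem cshs_strictly_larger (f : ℝ → ℝ)
    (hf : ∀ x : ℝ, f x = 3 / 2 * x ^ 2 - 1 / 2 * x ^ 3) :
    (¬ ∃ (α : ℝ) (p : ℕ → ℝ), 0 ≤ α ∧ α ≤ 1 ∧ (∀ i, 0 ≤ p i) ∧ Summable p ∧
        (∑' i, p i) = 1 ∧ ∀ x ∈ Set.Ico (0 : ℝ) 1, f x = α * ∑' i, p i * x ^ i) ∧
    (∀ n : ℕ, 0 < n →
      ConvexOn ℝ (Set.Icc (0 : ℝ) (n : ℝ)) (fun x => f (1 - x / n)) ∧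
      AntitoneOn (fun x => f (1 - x / n)) (Set.Icc (0 : ℝ) (n : ℝ)) ∧
      (∀ x ∈ Set.Icc (0 : ℝ) (n : ℝ), 0 ≤ f (1 - x / n)) ∧
      f (1 - 0 / n) = 1) := by
  obtain rfl : f = fun t => 3 / 2 * t ^ 2 - 1 / 2 * t ^ 3 := funext hf
  refine ⟨not_exists_eq_mul_tsum_of_sq_lt (K := 3 / 2) (x₀ := 1 / 2) (by norm_num)
    (fun x hx => by nlinarith [pow_pos hx.1 3]) (by norm_num) (by norm_num),
    fun n hn => ?_⟩
  have hn' : (0 : ℝ) < n := Nat.cast_pos.2 hn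
  exact ⟨convexOn_cubic.comp_one_sub_div hn', monotoneOn_cubic.antitoneOn_comp_one_sub_div hn',
    fun x hx => cubic_nonneg (mapsTo_one_sub_div_Icc hn' hx), by norm_num⟩
end
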